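/- arXiv:1403.7480 — 3 statements merged into one kernel-verified Lean document; each statement's English description precedes it below -/
import Mathlib

section
/- Let α be an expanding algebraic number (an algebraic number all of whose conjugates, including α itself, have modulus greater than 1), R a complete residue system mod α in ℤ[α], and J the associated backward division map. Then ℤ[α] = R[α] if and only if ℘ = {J^{(n)}(0) : n ≥ 0}. -/
open Polynomial

/-- `ℤ[α]`: the set of values `P(α)` for `P ∈ ℤ[x]`. -/
def Zadj (α : ℂ) : Set ℂ := {z | ∃ P : ℤ[X], aeval α P = z}

/-- `F[α]`: the set of all sums `Σ_{j=0}^{n} f_j α^j` with `n ∈ ℕ` and `f_0, …, f_n ∈ F`. -/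
def repSet (α : ℂ) (F : Set ℂ) : Set ℂ :=
  {z | ∃ (n : ℕ) (f : ℕ → ℂ), (∀ j ≤ n, f j ∈ F) ∧
    z = ∑ j ∈ Finset.range (n + 1), f j * α ^ j}

/-- `R` is a complete residue system mod `α` in `ℤ[α]`: `R ⊆ ℤ[α]` and every `β ∈ ℤ[α]`
is congruent modulo the ideal `αℤ[α]` to exactly one element of `R`. -/
def IsCRS (α : ℂ) (R : Set ℂ) : Prop :=
  R ⊆ Zadj α ∧ ∀ β ∈ Zadj α, ∃! r, r ∈ R ∧ ∃ γ ∈ Zadj α, β - r = α * γ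

/-- `J` is the backward division map associated to the CRS `R`:
for every `β ∈ ℤ[α]`, `J β ∈ ℤ[α]` and `β = r + α · J β` for some `r ∈ R`. -/
def IsJmap (α : ℂ) (R : Set ℂ) (J : ℂ → ℂ) : Prop :=
  ∀ β ∈ Zadj α, J β ∈ Zadj α ∧ ∃ r ∈ R, β = r + α * J β

/-- `℘`: the set of periodic elements of `ℤ[α]` under `J`. -/
def perSet (α : ℂ) (J : ℂ → ℂ) : Set ℂ :=
  {β ∈ Zadj α | ∃ n : ℕ, 1 ≤ n ∧ J^[n] β = β}

/-- The orbit of `β` under `J` is eventually periodic. -/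
def EvPeriodic (J : ℂ → ℂ) (β : ℂ) : Prop :=
  ∃ (k m : ℕ), 1 ≤ m ∧ J^[k + m] β = J^[k] β

/-!
If `R[α] = ℤ[α]`, every `β ∈ ℤ[α]` is driven to `0` by `J` in at least one step (strip off the
lowest digit), so `0` is periodic and a periodic `β` lies on the orbit of `0`.

Conversely, every `J`-orbit in `ℤ[α]` is eventually periodic. First, `R` is finite, because
`ℤ[α]/αℤ[α]` is a quotient of `ℤ/Nℤ` for a nonzero integer `N ∈ αℤ[α]` (a constant term of a
polynomial vanishing at `α`). In the number field `K = ℚ(α)` the relation `β = r + α · J β` then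
bounds every conjugate of the orbit, since all conjugates of `α` have modulus `> 1`, and after
multiplication by a fixed common denominator the orbit becomes integral: at a prime where `α` is
integral so is all of `ℤ[α]`, and at any other prime division by `α` does not increase the
valuation. Algebraic integers with bounded conjugates form a finite set. So if `℘` is the orbit
of `0`, the periodic tail of the orbit of `β` passes through `0`, and `β` has a finite expansion.
-/

open Function Set

theorem Polynomial.aeval_eq_coeff_zero_add_mul_aeval_divX {R A : Type*} [CommSemiring R]
    [CommSemiring A] [Algebra R A] (a : A) (P : R[X]) :
    aeval a P = algebraMap R A (P.coeff 0) + a * aeval a P.divX := by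
  have h := congrArg (aeval a) (X_mul_divX_add P)
  rw [map_add, map_mul, aeval_X, aeval_C] at h
  rw [← h, add_comm]

theorem Polynomial.exists_coeff_zero_ne_zero_aeval_eq_zero {R A : Type*} [CommRing R]
    [CommRing A] [NoZeroDivisors A] [Algebra R A] {a : A} (ha : IsAlgebraic R a) (ha0 : a ≠ 0) :
    ∃ Q : R[X], Q.coeff 0 ≠ 0 ∧ aeval a Q = 0 := by
  obtain ⟨P, hP0, hPa⟩ := ha
  obtain ⟨Q, hPQ, hXQ⟩ := exists_eq_pow_rootMultiplicity_mul_and_not_dvd P hP0 0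
  rw [C_0, sub_zero, X_dvd_iff] at hXQ
  rw [hPQ, map_mul, map_pow, C_0, sub_zero, aeval_X] at hPa
  exact ⟨Q, hXQ, (mul_eq_zero.1 hPa).resolve_left (pow_ne_zero _ ha0)⟩

theorem Finset.sum_range_succ_mul_pow_eq_add_mul {A : Type*} [CommSemiring A] (a : A)
    (f : ℕ → A) (n : ℕ) :
    ∑ j ∈ range (n + 2), f j * a ^ j = f 0 + a * ∑ j ∈ range (n + 1), f (j + 1) * a ^ j := by
  rw [sum_range_succ', mul_sum, add_comm]
  simp only [pow_zero, mul_one, pow_succ]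
  congr 1
  exact sum_congr rfl fun j _ => by ring

namespace Function

variable {X : Type*} {f : X → X} {S : Set X} {x₀ : X}

theorem inter_periodicPts_eq_range_iterate (hf : MapsTo f S S) (hx₀ : x₀ ∈ S)
    (h : ∀ x ∈ S, ∃ n, 0 < n ∧ f^[n] x = x₀) : S ∩ periodicPts f = range (f^[·] x₀) := by
  obtain ⟨N, hN, hNx₀⟩ := h x₀ hx₀
  apply Subset.antisymm
  · rintro x ⟨hx, hper⟩
    obtain ⟨p, hp, hpx⟩ := mem_periodicPts.1 hper
    obtain ⟨M, -, hMx⟩ := h x hx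
    refine ⟨p * M - M, ?_⟩
    dsimp only
    rw [← hMx, ← iterate_add_apply, Nat.sub_add_cancel (Nat.le_mul_of_pos_left M hp)]
    exact (hpx.mul_const M).eq
  · rintro _ ⟨m, rfl⟩
    exact ⟨hf.iterate m hx₀, mk_mem_periodicPts hN (IsPeriodicPt.apply_iterate hNx₀ m)⟩

theorem exists_iterate_eq_of_inter_periodicPts_eq_range_iterate (hf : MapsTo f S S)
    (h : S ∩ periodicPts f = range (f^[·] x₀)) {x : X} (hx : x ∈ S) {k : ℕ}
    (hk : f^[k] x ∈ periodicPts f) : ∃ n, 0 < n ∧ f^[n] x = x₀ := by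
  have hx₀ : x₀ ∈ S ∩ periodicPts f := h ▸ ⟨0, rfl⟩
  obtain ⟨N, hN, hNx₀⟩ := mem_periodicPts.1 hx₀.2
  obtain ⟨s, hs⟩ : f^[k] x ∈ range (f^[·] x₀) := h ▸ ⟨hf.iterate k hx, hk⟩
  have hsN : s + 1 ≤ N * (s + 1) := Nat.le_mul_of_pos_left _ hN
  refine ⟨N * (s + 1) - s + k, by omega, ?_⟩
  rw [iterate_add_apply, ← hs, ← iterate_add_apply, Nat.sub_add_cancel (by omega)]
  exact (hNx₀.mul_const (s + 1)).eq

end Function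

theorem norm_le_max_of_norm_sub_mul_succ_le {𝕜 : Type*} [NormedDivisionRing 𝕜] {a : 𝕜}
    (ha : 1 < ‖a‖) {x : ℕ → 𝕜} {C : ℝ} (h : ∀ k, ‖x k - a * x (k + 1)‖ ≤ C) (k : ℕ) :
    ‖x k‖ ≤ max ‖x 0‖ (C / (‖a‖ - 1)) := by
  set M := max ‖x 0‖ (C / (‖a‖ - 1))
  have hCM : C ≤ M * (‖a‖ - 1) := (div_le_iff₀ (by linarith)).1 (le_max_right _ _)
  induction k with
  | zero => exact le_max_left _ _
  | succ k ih =>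
    refine le_of_mul_le_mul_left ?_ (by linarith : 0 < ‖a‖)
    calc ‖a‖ * ‖x (k + 1)‖ = ‖x k - (x k - a * x (k + 1))‖ := by rw [sub_sub_cancel, norm_mul]
      _ ≤ ‖x k‖ + ‖x k - a * x (k + 1)‖ := norm_sub_le _ _
      _ ≤ M + C := add_le_add ih (h k)
      _ ≤ ‖a‖ * M := by linarith

theorem Valuation.map_le_one_of_map_sub_mul_le_one {K Γ₀ : Type*} [Ring K]
    [LinearOrderedCommGroupWithZero Γ₀] (v : Valuation K Γ₀) {a y z : K} (ha : 1 ≤ v a)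
    (hy : v y ≤ 1) (hyz : v (y - a * z) ≤ 1) : v z ≤ 1 :=
  calc v z ≤ v a * v z := le_mul_of_one_le_left' ha
    _ = v (y - (y - a * z)) := by rw [sub_sub_cancel, map_mul]
    _ ≤ max (v y) (v (y - a * z)) := v.map_sub _ _
    _ ≤ 1 := max_le hy hyz

namespace NumberField

open IsDedekindDomain

variable {K : Type*} [Field K] [NumberField K] {a : K} {R : Set K} {x : ℕ → K}

theorem exists_norm_embedding_le (ha : ∀ φ : K →+* ℂ, 1 < ‖φ a‖) (hR : R.Finite)
    (hxR : ∀ k, x k - a * x (k + 1) ∈ R) : ∃ B, ∀ (φ : K →+* ℂ) k, ‖φ (x k)‖ ≤ B := by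
  have hφ : ∀ φ : K →+* ℂ, ∃ B, ∀ k, ‖φ (x k)‖ ≤ B := by
    intro φ
    obtain ⟨C, hC⟩ := (hR.image fun r => ‖φ r‖).bddAbove
    refine ⟨_, norm_le_max_of_norm_sub_mul_succ_le (ha φ) (x := fun k => φ (x k)) (C := C)
      fun k => ?_⟩
    rw [← map_mul, ← map_sub]
    exact hC (mem_image_of_mem _ (hxR k))
  choose B hB using hφ
  obtain ⟨B', hB'⟩ := Finite.exists_le B
  exact ⟨B', fun φ k => (hB φ k).trans (hB' φ)⟩

theorem exists_ne_zero_isIntegral_mul (hR : R.Finite) (hx : ∀ k, x k ∈ Algebra.adjoin ℤ {a})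
    (hxR : ∀ k, x k - a * x (k + 1) ∈ R) : ∃ c : K, c ≠ 0 ∧ ∀ k, IsIntegral ℤ (c * x k) := by
  classical
  obtain ⟨⟨b, hb⟩, hbint⟩ := IsLocalization.exist_integer_multiples_of_finset
    (nonZeroDivisors (𝓞 K)) (insert (x 0) hR.toFinset)
  set c := algebraMap (𝓞 K) K b
  have hc0 : c ≠ 0 :=
    (map_ne_zero_iff _ (IsFractionRing.injective (𝓞 K) K)).2 (nonZeroDivisors.ne_zero hb)
  have hcint : ∀ y ∈ insert (x 0) hR.toFinset, ∀ v : HeightOneSpectrum (𝓞 K),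
      v.valuation K (c * y) ≤ 1 := by
    intro y hy v
    obtain ⟨z, hz⟩ := hbint y hy
    rw [Algebra.smul_def] at hz
    rw [← hz]
    exact v.valuation_le_one z
  have hval : ∀ (v : HeightOneSpectrum (𝓞 K)) k, v.valuation K (c * x k) ≤ 1 := by
    intro v k
    rcases le_or_gt (v.valuation K a) 1 with hva | hva
    · have hadj : Algebra.adjoin ℤ {a} ≤ subalgebraOfSubring (v.valuation K).integer :=
        Algebra.adjoin_le (singleton_subset_iff.2 (mem_subalgebraOfSubring.2 hva))
      rw [map_mul]
      exact mul_le_one' (v.valuation_le_one b) (hadj (hx k))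
    · induction k with
      | zero => exact hcint _ (Finset.mem_insert_self _ _) v
      | succ k ih =>
        refine (v.valuation K).map_le_one_of_map_sub_mul_le_one hva.le ih ?_
        rw [show c * x k - a * (c * x (k + 1)) = c * (x k - a * x (k + 1)) by ring]
        exact hcint _ (Finset.mem_insert_of_mem (hR.mem_toFinset.2 (hxR k))) v
  refine ⟨c, hc0, fun k => ?_⟩
  obtain ⟨z, hz⟩ := HeightOneSpectrum.mem_integers_of_valuation_le_one K _ (fun v => hval v k)
  exact hz ▸ z.isIntegral_coe

theorem finite_range_of_sub_mul_succ_mem (ha : ∀ φ : K →+* ℂ, 1 < ‖φ a‖) (hR : R.Finite)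
    (hx : ∀ k, x k ∈ Algebra.adjoin ℤ {a}) (hxR : ∀ k, x k - a * x (k + 1) ∈ R) :
    (range x).Finite := by
  obtain ⟨B, hB⟩ := exists_norm_embedding_le ha hR hxR
  obtain ⟨c, hc0, hc⟩ := exists_ne_zero_isIntegral_mul hR hx hxR
  obtain ⟨Bc, hBc⟩ := Finite.exists_le fun φ : K →+* ℂ => ‖φ c‖
  refine ((Embeddings.finite_of_norm_le K ℂ (Bc * B)).image (c⁻¹ * ·)).subset ?_
  rintro _ ⟨k, rfl⟩
  refine ⟨c * x k, ⟨hc k, fun φ => ?_⟩, inv_mul_cancel_left₀ hc0 _⟩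
  rw [map_mul, norm_mul]
  exact mul_le_mul (hBc φ) (hB φ k) (norm_nonneg _) ((norm_nonneg _).trans (hBc φ))

end NumberField

section Zadj

variable {α : ℂ}

theorem mem_Zadj {z : ℂ} : z ∈ Zadj α ↔ z ∈ Algebra.adjoin ℤ {α} := by
  rw [Algebra.adjoin_singleton_eq_range_aeval]
  rfl

theorem zero_mem_Zadj : (0 : ℂ) ∈ Zadj α := mem_Zadj.2 (zero_mem _)

theorem add_mul_mem_Zadj {r γ : ℂ} (hr : r ∈ Zadj α) (hγ : γ ∈ Zadj α) :
    r + α * γ ∈ Zadj α :=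
  mem_Zadj.2 <| add_mem (mem_Zadj.1 hr)
    (mul_mem (Algebra.self_mem_adjoin_singleton ℤ α) (mem_Zadj.1 hγ))

theorem exists_intCast_sub_eq_mul {β : ℂ} (hβ : β ∈ Zadj α) :
    ∃ m : ℤ, ∃ γ ∈ Zadj α, β - m = α * γ := by
  obtain ⟨P, rfl⟩ := hβ
  refine ⟨P.coeff 0, aeval α P.divX, ⟨_, rfl⟩, ?_⟩
  rw [aeval_eq_coeff_zero_add_mul_aeval_divX, eq_intCast]
  ring

theorem exists_intCast_eq_mul (hα : IsAlgebraic ℚ α) (hα0 : α ≠ 0) :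
    ∃ N : ℤ, N ≠ 0 ∧ ∃ γ ∈ Zadj α, (N : ℂ) = α * γ := by
  obtain ⟨Q, hQ0, hQα⟩ := exists_coeff_zero_ne_zero_aeval_eq_zero
    ((IsFractionRing.isAlgebraic_iff ℤ ℚ ℂ).2 hα) hα0
  refine ⟨-Q.coeff 0, neg_ne_zero.2 hQ0, aeval α Q.divX, ⟨_, rfl⟩, ?_⟩
  rw [aeval_eq_coeff_zero_add_mul_aeval_divX, eq_intCast] at hQα
  push_cast
  linear_combination -hQα

theorem IsCRS.finite {R : Set ℂ} (hα : IsAlgebraic ℚ α) (hα0 : α ≠ 0) (hR : IsCRS α R) :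
    R.Finite := by
  obtain ⟨N, hN0, γN, hγN, hN⟩ := exists_intCast_eq_mul hα hα0
  choose! m γ hγ hmγ using fun β (hβ : β ∈ Zadj α) => exists_intCast_sub_eq_mul hβ
  have : NeZero N.natAbs := ⟨Int.natAbs_ne_zero.2 hN0⟩
  refine Finite.of_finite_image (f := fun r => (m r : ZMod N.natAbs)) (toFinite _) ?_
  intro r hr r' hr' hrr'
  obtain ⟨t, ht⟩ : N ∣ m r' - m r := by
    rw [← Int.natAbs_dvd]
    exact (ZMod.intCast_eq_intCast_iff_dvd_sub _ _ _).1 hrr'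
  have hcong : r - r' = α * (γ r - γ r' - t * γN) := by
    have htC : (m r' : ℂ) - m r = N * t := by exact_mod_cast ht
    linear_combination hmγ r (hR.1 hr) - hmγ r' (hR.1 hr') - htC - t * hN
  have hmem : γ r - γ r' - t * γN ∈ Zadj α :=
    mem_Zadj.2 <| sub_mem (sub_mem (mem_Zadj.1 (hγ r (hR.1 hr))) (mem_Zadj.1 (hγ r' (hR.1 hr'))))
      (mul_mem (intCast_mem _ t) (mem_Zadj.1 hγN))
  exact (hR.2 r (hR.1 hr)).unique ⟨hr, 0, zero_mem_Zadj, by ring⟩ ⟨hr', _, hmem, hcong⟩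

end Zadj

section repSet

variable {α : ℂ} {F : Set ℂ}

theorem repSet_induction {P : ℂ → Prop} (base : ∀ r ∈ F, P r)
    (step : ∀ r ∈ F, ∀ γ, P γ → P (r + α * γ)) {β : ℂ} (hβ : β ∈ repSet α F) : P β := by
  obtain ⟨n, f, hf, rfl⟩ := hβ
  induction n generalizing f with
  | zero => simpa using base _ (hf 0 le_rfl)
  | succ n ih =>
    rw [Finset.sum_range_succ_mul_pow_eq_add_mul]
    exact step _ (hf 0 (Nat.zero_le _)) _
      (ih (fun j => f (j + 1)) fun j hj => hf (j + 1) (Nat.succ_le_succ hj))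

theorem mem_repSet_of_mem {r : ℂ} (hr : r ∈ F) : r ∈ repSet α F :=
  ⟨0, fun _ => r, fun _ _ => hr, by simp⟩

theorem add_mul_mem_repSet {r γ : ℂ} (hr : r ∈ F) (hγ : γ ∈ repSet α F) :
    r + α * γ ∈ repSet α F := by
  obtain ⟨n, f, hf, rfl⟩ := hγ
  refine ⟨n + 1, fun j => Nat.casesOn j r f, fun j hj => ?_, ?_⟩
  · cases j with
    | zero => exact hr
    | succ j => exact hf j (Nat.le_of_succ_le_succ hj)
  · rw [Finset.sum_range_succ_mul_pow_eq_add_mul]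
    rfl

end repSet

section Jmap

variable {α : ℂ} {R : Set ℂ} {J : ℂ → ℂ}

theorem perSet_eq_inter (α : ℂ) (J : ℂ → ℂ) : perSet α J = Zadj α ∩ periodicPts J := rfl

theorem EvPeriodic.exists_iterate_mem_periodicPts {β : ℂ} (h : EvPeriodic J β) :
    ∃ k, J^[k] β ∈ periodicPts J := by
  obtain ⟨k, m, hm, hkm⟩ := h
  refine ⟨k, mk_mem_periodicPts hm ?_⟩
  rw [IsPeriodicPt, IsFixedPt, ← iterate_add_apply, add_comm, hkm]

theorem IsJmap.mapsTo (hJ : IsJmap α R J) : MapsTo J (Zadj α) (Zadj α) :=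
  fun β hβ => (hJ β hβ).1

theorem IsJmap.apply_add_mul (hR : IsCRS α R) (hJ : IsJmap α R J) (hα0 : α ≠ 0) {r γ : ℂ}
    (hr : r ∈ R) (hγ : γ ∈ Zadj α) : J (r + α * γ) = γ := by
  have hβ : r + α * γ ∈ Zadj α := add_mul_mem_Zadj (hR.1 hr) hγ
  obtain ⟨hJβ, r', hr', h⟩ := hJ _ hβ
  obtain rfl : r' = r := (hR.2 _ hβ).unique ⟨hr', J _, hJβ, by linear_combination h⟩
    ⟨hr, γ, hγ, by ring⟩
  exact mul_left_cancel₀ hα0 (by linear_combination -h)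

theorem mem_repSet_iff (hR : IsCRS α R) (hJ : IsJmap α R J) (hα0 : α ≠ 0) {β : ℂ} :
    β ∈ repSet α R ↔ β ∈ Zadj α ∧ ∃ n, 0 < n ∧ J^[n] β = 0 := by
  constructor
  · refine repSet_induction (P := fun β => β ∈ Zadj α ∧ ∃ n, 0 < n ∧ J^[n] β = 0)
      (fun r hr => ⟨hR.1 hr, 1, one_pos, ?_⟩) fun r hr γ ⟨hγ, n, hn, hJγ⟩ =>
      ⟨add_mul_mem_Zadj (hR.1 hr) hγ, n + 1, n.succ_pos, ?_⟩
    · simpa using hJ.apply_add_mul hR hα0 hr zero_mem_Zadj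
    · rw [iterate_succ_apply, hJ.apply_add_mul hR hα0 hr hγ, hJγ]
  · rintro ⟨hβ, n, hn, hJβ⟩
    induction n generalizing β with
    | zero => exact absurd hn (lt_irrefl 0)
    | succ n ih =>
      obtain ⟨hJβZ, r, hr, hβr⟩ := hJ β hβ
      rw [iterate_succ_apply] at hJβ
      rcases n.eq_zero_or_pos with rfl | hn'
      · rw [iterate_zero_apply] at hJβ
        rw [hβr, hJβ, mul_zero, add_zero]
        exact mem_repSet_of_mem hr
      · exact hβr ▸ add_mul_mem_repSet hr (ih hJβZ hn' hJβ)

end Jmap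

section adjoinSimple

open IntermediateField

variable {α : ℂ}

theorem coe_aeval_gen (P : ℤ[X]) : (aeval (AdjoinSimple.gen ℚ α) P : ℂ) = aeval α P :=
  (aeval_algHom_apply ((ℚ⟮α⟯.val).restrictScalars ℤ) _ P).symm

theorem exists_mem_adjoin_gen_coe_eq {z : ℂ} (hz : z ∈ Zadj α) :
    ∃ y ∈ Algebra.adjoin ℤ {AdjoinSimple.gen ℚ α}, (y : ℂ) = z := by
  obtain ⟨P, rfl⟩ := hz
  exact ⟨_, aeval_mem_adjoin_singleton ℤ _, coe_aeval_gen P⟩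

theorem one_lt_norm_embedding_gen (hexp : ∀ z : ℂ, aeval z (minpoly ℚ α) = 0 → 1 < ‖z‖)
    (φ : ℚ⟮α⟯ →+* ℂ) : 1 < ‖φ (AdjoinSimple.gen ℚ α)‖ := by
  apply hexp
  rw [← minpoly_gen]
  exact (aeval_algHom_apply φ.toRatAlgHom _ _).trans
    ((congrArg _ (minpoly.aeval ℚ _)).trans (map_zero _))

theorem evPeriodic_of_mem_Zadj {R : Set ℂ} {J : ℂ → ℂ} (hα : IsAlgebraic ℚ α)
    (hexp : ∀ z : ℂ, aeval z (minpoly ℚ α) = 0 → 1 < ‖z‖) (hR : R.Finite) (hJ : IsJmap α R J)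
    {β : ℂ} (hβ : β ∈ Zadj α) : EvPeriodic J β := by
  have : FiniteDimensional ℚ ℚ⟮α⟯ := adjoin.finiteDimensional hα.isIntegral
  have : NumberField ℚ⟮α⟯ := ⟨⟩
  choose x hx hxβ using fun k => exists_mem_adjoin_gen_coe_eq (hJ.mapsTo.iterate k hβ)
  have hxR : ∀ k, x k - AdjoinSimple.gen ℚ α * x (k + 1) ∈ Subtype.val ⁻¹' R := by
    intro k
    obtain ⟨-, r, hr, hrJ⟩ := hJ _ (hJ.mapsTo.iterate k hβ)
    change (x k : ℂ) - (AdjoinSimple.gen ℚ α : ℂ) * x (k + 1) ∈ R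
    rw [hxβ, hxβ, AdjoinSimple.coe_gen, iterate_succ_apply', sub_eq_of_eq_add hrJ]
    exact hr
  obtain ⟨k, m, hkm, hxkm⟩ := (NumberField.finite_range_of_sub_mul_succ_mem
    (one_lt_norm_embedding_gen hexp) (hR.preimage Subtype.val_injective.injOn) hx hxR
    ).exists_lt_map_eq_of_forall_mem fun k => mem_range_self k
  refine ⟨k, m - k, by omega, ?_⟩
  rw [Nat.add_sub_cancel' hkm.le, ← hxβ, ← hxβ, hxkm]

end adjoinSimple

/-- Corollary 2 (iii): for an expanding algebraic number `α`, a CRS `R` and the associated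
map `J`, one has `ℤ[α] = R[α]` if and only if `℘ = {J^{(n)}(0) : n ≥ 0}`. -/
theorem representation_iff_perSet_orbit_zero (α : ℂ) (hα : IsAlgebraic ℚ α)
    (hexp : ∀ z : ℂ, aeval z (minpoly ℚ α) = 0 → 1 < ‖z‖)
    (R : Set ℂ) (hR : IsCRS α R) (J : ℂ → ℂ) (hJ : IsJmap α R J) :
    repSet α R = Zadj α ↔ perSet α J = {β | ∃ n : ℕ, J^[n] 0 = β} := by
  have hα0 : α ≠ 0 := norm_pos_iff.1 (one_pos.trans (hexp α (minpoly.aeval ℚ α)))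
  have hrepSet : repSet α R = {β ∈ Zadj α | ∃ n, 0 < n ∧ J^[n] β = 0} :=
    ext fun β => mem_repSet_iff hR hJ hα0
  rw [perSet_eq_inter, hrepSet, sep_eq_self_iff_mem_true]
  constructor
  · exact inter_periodicPts_eq_range_iterate hJ.mapsTo zero_mem_Zadj
  · intro h β hβ
    obtain ⟨k, hk⟩ :=
      (evPeriodic_of_mem_Zadj hα hexp (hR.finite hα hα0) hJ hβ).exists_iterate_mem_periodicPts
    exact exists_iterate_eq_of_inter_periodicPts_eq_range_iterate hJ.mapsTo h hβ hk
end

section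
/- Let H be a positive integer and let α be an algebraic number none of whose conjugates (the complex roots of its minimal polynomial, including α itself) has modulus 1. Then the language over the alphabet {d ∈ ℤ : |d| ≤ H} consisting of all words d_m … d_0 such that Σ_{i=0}^{m} d_i α^i = 0 is a regular language, i.e., it is recognized by a finite automaton. -/
/-!
Reading a word letter by letter, the value is updated by `q ↦ α q + d`; this is a deterministic
automaton with state space `ℂ` accepting exactly the words of value `0`. By Myhill–Nerode it is
enough that only finitely many states are useful, i.e. reachable from `0` and able to reach `0`.
A reachable state lies in `ℤ[α]`, and a state that can reach `0` lies in `ℤ[α⁻¹]`; an element of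
both is an algebraic integer of `ℚ(α)`. For an embedding `φ` of `ℚ(α)`, reachability bounds
`|φ x|` by `H / (1 - |φ α|)` when `|φ α| < 1`, while when `|φ α| > 1` a state with
`|φ x| > H / (|φ α| - 1)` only grows and never reaches `0`. There are finitely many algebraic
integers of `ℚ(α)` with all conjugates bounded.
-/

open Polynomial

/-- The complex number represented by the word `d_m … d_0` (read left to right)
in base `α`: `Σ_{i=0}^{m} d_i α^i`. -/
def wordValue (α : ℂ) {H : ℕ} (w : List {d : ℤ // d.natAbs ≤ H}) : ℂ :=
  w.foldl (fun acc d => α * acc + (d.1 : ℂ)) 0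

namespace DFA

variable {Γ σ : Type*}

def usefulStates (M : DFA Γ σ) : Set σ :=
  {s | (∃ x, M.eval x = s) ∧ ∃ y, M.evalFrom s y ∈ M.accept}

theorem isRegular_accepts_of_finite_usefulStates (M : DFA Γ σ) (h : M.usefulStates.Finite) :
    M.accepts.IsRegular := by
  refine Language.IsRegular.of_finite_range_leftQuotient ?_
  rw [Language.leftQuotient_accepts]
  refine ((h.image M.acceptsFrom).insert 0).subset ?_
  rintro _ ⟨x, rfl⟩
  by_cases hx : ∃ y, M.evalFrom (M.eval x) y ∈ M.accept
  · exact Or.inr ⟨_, ⟨⟨x, rfl⟩, hx⟩, rfl⟩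
  · push Not at hx
    left
    ext y
    simpa [DFA.mem_acceptsFrom] using hx y

end DFA

abbrev Digit (H : ℕ) := {d : ℤ // d.natAbs ≤ H}

def digitDFA {R : Type*} [Ring R] (β : R) (H : ℕ) : DFA (Digit H) R where
  step q d := β * q + d
  start := 0
  accept := {0}

theorem digitDFA_accepts (α : ℂ) (H : ℕ) :
    (digitDFA α H).accepts = {w | wordValue α w = 0} :=
  rfl

section Ring

variable {R S : Type*} [Ring R] [Ring S] {β : R} {H : ℕ}

theorem mem_usefulStates_digitDFA {x : R} :
    x ∈ (digitDFA β H).usefulStates ↔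
      (∃ u, (digitDFA β H).eval u = x) ∧ ∃ w, (digitDFA β H).evalFrom x w = 0 :=
  Iff.rfl

theorem map_evalFrom_digitDFA (φ : R →+* S) (q : R) (w : List (Digit H)) :
    φ ((digitDFA β H).evalFrom q w) = (digitDFA (φ β) H).evalFrom (φ q) w := by
  induction w generalizing q with
  | nil => rfl
  | cons a w ih => simpa [digitDFA] using ih (β * q + a)

theorem map_eval_digitDFA (φ : R →+* S) (w : List (Digit H)) :
    φ ((digitDFA β H).eval w) = (digitDFA (φ β) H).eval w :=
  (map_evalFrom_digitDFA φ 0 w).trans (congrArg ((digitDFA (φ β) H).evalFrom · w) (map_zero φ))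

theorem map_mem_usefulStates_digitDFA (φ : R →+* S) {x : R}
    (hx : x ∈ (digitDFA β H).usefulStates) : φ x ∈ (digitDFA (φ β) H).usefulStates := by
  obtain ⟨⟨u, rfl⟩, w, hw⟩ := mem_usefulStates_digitDFA.mp hx
  refine mem_usefulStates_digitDFA.mpr ⟨⟨u, (map_eval_digitDFA φ u).symm⟩, w, ?_⟩
  rw [← map_evalFrom_digitDFA, hw, map_zero]

theorem usefulStates_digitDFA_map_subset {φ : R →+* S} (hφ : Function.Injective φ) :
    (digitDFA (φ β) H).usefulStates ⊆ φ '' (digitDFA β H).usefulStates := by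
  rintro _ ⟨⟨u, rfl⟩, w, hw⟩
  refine ⟨(digitDFA β H).eval u, ⟨⟨u, rfl⟩, w, ?_⟩, map_eval_digitDFA φ u⟩
  apply hφ
  rw [map_evalFrom_digitDFA, map_eval_digitDFA, map_zero]
  exact hw

theorem evalFrom_digitDFA_mem {T : Type*} [SetLike T R] [SubringClass T R] {s : T} (hβ : β ∈ s)
    {q : R} (hq : q ∈ s) (w : List (Digit H)) : (digitDFA β H).evalFrom q w ∈ s := by
  induction w generalizing q with
  | nil => exact hq
  | cons a w ih => exact ih (add_mem (mul_mem hβ hq) (intCast_mem s a))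

end Ring

theorem mem_of_evalFrom_digitDFA_mem {K T : Type*} [Field K] [SetLike T K] [SubringClass T K]
    {s : T} {β : K} (hβ : β ≠ 0) (hβs : β⁻¹ ∈ s) {H : ℕ} {q : K} (w : List (Digit H))
    (hw : (digitDFA β H).evalFrom q w ∈ s) : q ∈ s := by
  induction w generalizing q with
  | nil => exact hw
  | cons a w ih =>
    have hstep : β * q + a ∈ s := ih hw
    have hq : q = β⁻¹ * ((β * q + a) - a) := by field_simp; ring
    rw [hq]
    exact mul_mem hβs (sub_mem hstep (intCast_mem s a))

section Integrality

variable {R K : Type*} [CommRing R] [Field K] [Algebra R K]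

theorem aeval_mul_zpow_mem_span (p : R[X]) {β : K} (hβ : β ≠ 0) (t : ℤ) :
    aeval β p * β ^ t ∈ Submodule.span R ((β ^ ·) '' Set.Icc t (t + p.natDegree)) := by
  rw [aeval_eq_sum_range, Finset.sum_mul]
  refine Submodule.sum_mem _ fun i hi => ?_
  have hi : i ≤ p.natDegree := Nat.lt_succ_iff.mp (Finset.mem_range.mp hi)
  rw [smul_mul_assoc, ← zpow_natCast, ← zpow_add₀ hβ]
  exact Submodule.smul_mem _ _ (Submodule.subset_span ⟨_, ⟨by omega, by omega⟩, rfl⟩)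

theorem isIntegral_of_mem_adjoin_of_mem_adjoin_inv {β x : K} (hβ : β ≠ 0)
    (h : x ∈ Algebra.adjoin R {β}) (h' : x ∈ Algebra.adjoin R {β⁻¹}) : IsIntegral R x := by
  rw [Algebra.adjoin_singleton_eq_range_aeval] at h h'
  obtain ⟨p, rfl⟩ := h
  obtain ⟨q, hq⟩ := h'
  change aeval β⁻¹ q = aeval β p at hq
  -- `x` maps the span of `β ^ t`, `-deg q ≤ t ≤ deg p`, into itself: for `t ≤ 0` expand `x` with
  -- `p`, for `t > 0` with `q`.
  set N := Submodule.span R ((β ^ ·) '' Set.Icc (-q.natDegree : ℤ) p.natDegree)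
  have mul_mem : ∀ t ∈ Set.Icc (-q.natDegree : ℤ) p.natDegree, aeval β p * β ^ t ∈ N := by
    rintro t ⟨ht₁, ht₂⟩
    rcases le_or_gt t 0 with ht | ht
    · exact Submodule.span_mono (Set.image_mono (Set.Icc_subset_Icc ht₁ (by omega)))
        (aeval_mul_zpow_mem_span p hβ t)
    · rw [← hq, ← neg_neg t, ← inv_zpow']
      refine Submodule.span_mono ?_ (aeval_mul_zpow_mem_span q (inv_ne_zero hβ) (-t))
      rintro _ ⟨s, ⟨hs₁, hs₂⟩, rfl⟩
      exact ⟨-s, ⟨by omega, by omega⟩, (inv_zpow' β s).symm⟩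
  refine isIntegral_of_smul_mem_submodule N ?_ (Submodule.fg_span ((Set.finite_Icc _ _).image _))
    _ fun n hn => ?_
  · rw [Submodule.ne_bot_iff]
    exact ⟨1, Submodule.subset_span ⟨0, ⟨by simp, by simp⟩, zpow_zero β⟩, one_ne_zero⟩
  · induction hn using Submodule.span_induction with
    | mem y hy => obtain ⟨t, ht, rfl⟩ := hy; exact mul_mem t ht
    | zero => simp
    | add y z _ _ hy hz => rw [smul_add]; exact N.add_mem hy hz
    | smul a y _ hy => rw [smul_comm]; exact N.smul_mem a hy

end Integrality

section Norm

variable {H : ℕ} {z : ℂ}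

theorem norm_digit_le (a : Digit H) : ‖((a : ℤ) : ℂ)‖ ≤ H := by
  rw [Complex.norm_intCast, ← Int.cast_abs, Int.abs_eq_natAbs, Int.cast_natCast]
  exact_mod_cast a.2

theorem norm_evalFrom_digitDFA_le (hz : ‖z‖ < 1) {q : ℂ} (hq : ‖q‖ ≤ H / (1 - ‖z‖))
    (w : List (Digit H)) : ‖(digitDFA z H).evalFrom q w‖ ≤ H / (1 - ‖z‖) := by
  induction w generalizing q with
  | nil => exact hq
  | cons a w ih =>
    refine ih ?_
    have hpos : 0 < 1 - ‖z‖ := by linarith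
    calc ‖z * q + a‖ ≤ ‖z‖ * (H / (1 - ‖z‖)) + H :=
          (norm_add_le _ _).trans (add_le_add (by rw [norm_mul]; gcongr) (norm_digit_le a))
      _ = H / (1 - ‖z‖) := by field_simp; ring

theorem lt_norm_evalFrom_digitDFA (hz : 1 < ‖z‖) {q : ℂ} (hq : H / (‖z‖ - 1) < ‖q‖)
    (w : List (Digit H)) : H / (‖z‖ - 1) < ‖(digitDFA z H).evalFrom q w‖ := by
  induction w generalizing q with
  | nil => exact hq
  | cons a w ih =>
    refine ih ?_
    have hpos : 0 < ‖z‖ - 1 := by linarith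
    calc H / (‖z‖ - 1) = ‖z‖ * (H / (‖z‖ - 1)) - H := by field_simp; ring
      _ < ‖z‖ * ‖q‖ - ‖((a : ℤ) : ℂ)‖ := by
          have := norm_digit_le a
          have := mul_lt_mul_of_pos_left hq (by linarith : 0 < ‖z‖)
          linarith
      _ ≤ ‖z * q + a‖ := by
          have := norm_sub_norm_le (z * q) (-(a : ℂ))
          rwa [norm_neg, sub_neg_eq_add, norm_mul] at this

theorem norm_le_of_mem_usefulStates_digitDFA (hz : ‖z‖ ≠ 1) {q : ℂ}
    (hq : q ∈ (digitDFA z H).usefulStates) : ‖q‖ ≤ H / |1 - ‖z‖| := by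
  obtain ⟨⟨u, rfl⟩, w, hw⟩ := mem_usefulStates_digitDFA.mp hq
  rcases hz.lt_or_gt with hz | hz
  · rw [abs_of_pos (by linarith)]
    exact norm_evalFrom_digitDFA_le hz (by simp [digitDFA]; bound) u
  · rw [abs_sub_comm, abs_of_pos (by linarith)]
    by_contra! h
    have := lt_norm_evalFrom_digitDFA hz h w
    rw [hw, norm_zero] at this
    exact this.not_ge (by bound)

end Norm

theorem isIntegral_of_mem_usefulStates_digitDFA {K : Type*} [Field K] {β x : K} {H : ℕ}
    (hx : x ∈ (digitDFA β H).usefulStates) : IsIntegral ℤ x := by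
  obtain ⟨⟨u, rfl⟩, w, hw⟩ := mem_usefulStates_digitDFA.mp hx
  have h := evalFrom_digitDFA_mem (Algebra.self_mem_adjoin_singleton ℤ β) (zero_mem _) u
  rcases eq_or_ne β 0 with rfl | hβ
  -- for `β = 0` every state reaches `0`, but the reachable ones lie in `ℤ[0] = ℤ`
  · exact adjoin_le_integralClosure isIntegral_zero h
  · refine isIntegral_of_mem_adjoin_of_mem_adjoin_inv hβ h (mem_of_evalFrom_digitDFA_mem hβ
      (Algebra.self_mem_adjoin_singleton ℤ β⁻¹) w ?_)
    rw [hw]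
    exact zero_mem _

theorem finite_usefulStates_digitDFA_of_numberField {K : Type*} [Field K] [NumberField K]
    {β : K} (H : ℕ) (hβ : ∀ φ : K →+* ℂ, ‖φ β‖ ≠ 1) : (digitDFA β H).usefulStates.Finite := by
  set bound := fun φ : K →+* ℂ => (H : ℝ) / |1 - ‖φ β‖|
  refine (NumberField.Embeddings.finite_of_norm_le K ℂ (⨆ φ, bound φ)).subset fun x hx =>
    ⟨isIntegral_of_mem_usefulStates_digitDFA hx, fun φ => ?_⟩
  calc ‖φ x‖ ≤ bound φ :=
        norm_le_of_mem_usefulStates_digitDFA (hβ φ) (map_mem_usefulStates_digitDFA φ hx)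
    _ ≤ ⨆ φ, bound φ := le_ciSup (Set.finite_range bound).bddAbove φ

open IntermediateField in
theorem norm_embedding_gen_ne_one {α : ℂ}
    (hconj : ∀ z : ℂ, aeval z (minpoly ℚ α) = 0 → ‖z‖ ≠ 1) (φ : ℚ⟮α⟯ →+* ℂ) :
    ‖φ (AdjoinSimple.gen ℚ α)‖ ≠ 1 := by
  refine hconj _ ((aeval_algHom_apply φ.toRatAlgHom _ _).trans ?_)
  -- `convert` identifies the two `Algebra ℚ ℚ⟮α⟯` instances (intermediate field and `ℚ`-algebra)
  convert map_zero φ.toRatAlgHom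
  exact aeval_gen_minpoly ℚ α

open IntermediateField in
theorem finite_usefulStates_digitDFA {α : ℂ} (H : ℕ) (hα : IsAlgebraic ℚ α)
    (hconj : ∀ z : ℂ, aeval z (minpoly ℚ α) = 0 → ‖z‖ ≠ 1) :
    (digitDFA α H).usefulStates.Finite := by
  have : FiniteDimensional ℚ ℚ⟮α⟯ := adjoin.finiteDimensional hα.isIntegral
  have : NumberField ℚ⟮α⟯ := {}
  have hfin := finite_usefulStates_digitDFA_of_numberField H (norm_embedding_gen_ne_one hconj)
  refine (hfin.image (algebraMap ℚ⟮α⟯ ℂ)).subset ?_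
  rw [← AdjoinSimple.algebraMap_gen ℚ α]
  exact usefulStates_digitDFA_map_subset (algebraMap ℚ⟮α⟯ ℂ).injective

theorem zero_representations_regular_general (H : ℕ) (α : ℂ) (hα : IsAlgebraic ℚ α)
    (hconj : ∀ z : ℂ, aeval z (minpoly ℚ α) = 0 → ‖z‖ ≠ 1) :
    Language.IsRegular {w : List {d : ℤ // d.natAbs ≤ H} | wordValue α w = 0} := by
  rw [← digitDFA_accepts]
  exact (digitDFA α H).isRegular_accepts_of_finite_usefulStates
    (finite_usefulStates_digitDFA H hα hconj)

/-- Theorem 3: let `H > 0` and let `α` be an algebraic number none of whose conjugates has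
modulus one.  Then the language of words `d_m … d_0` over the alphabet `{−H, …, H}` with
`Σ_{i=0}^{m} d_i α^i = 0` is regular, i.e. recognized by a finite automaton. -/
theorem zero_representations_regular (H : ℕ) (hH : 0 < H) (α : ℂ) (hα : IsAlgebraic ℚ α)
    (hconj : ∀ z : ℂ, aeval z (minpoly ℚ α) = 0 → ‖z‖ ≠ 1) :
    Language.IsRegular {w : List {d : ℤ // d.natAbs ≤ H} | wordValue α w = 0} :=
  zero_representations_regular_general H α hα hconj
end

section
/- The set of rational numbers belonging to 𝓕_2 is exactly {−2, −1, 1}; that is, for a rational number α, the minimal cardinality of a finite set S ⊆ ℂ with ℤ[α] = S[α] equals 2 if and only if α ∈ {−2, −1, 1}. In particular, 2 ∈ 𝓕_3. -/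
open Polynomial

/-- `α ∈ 𝓕_N`: the minimal cardinality of a finite `S ⊆ ℂ` with `ℤ[α] = S[α]` equals `N`. -/
def memF (α : ℂ) (N : ℕ) : Prop :=
  (∃ S : Finset ℂ, S.card = N ∧ repSet α ↑S = Zadj α) ∧
  ∀ S : Finset ℂ, repSet α ↑S = Zadj α → N ≤ S.card

/-!
For rational `α = p / q` with `|α| < 1` the set `S[α]` is bounded, so no finite `S` works.
Otherwise `P(α) ↦ P(0) mod p` is well defined on `ℤ[α]` by the rational root theorem and kills
`α`, so the digits of `S` must represent every residue mod `p`, i.e. `|p| ≤ |S|`; for `|S| = 2`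
this leaves `α ∈ {±1, ±2}`. For integer `α` everything reduces to expansions of integers in base
`α`: the digits `{0, 1}` work for `-2`, `{1, -1}` for `±1` and `{-1, 0, 1}` for `2`. Two digits
`{a, b}` never suffice in base `2`: they need distinct parities, and then `-a = a + 2 * (-a)` and
`-b = b + 2 * (-b)` are fixed points of the digit recursion, so they have no finite expansion
unless `a = b = 0`.
-/

open Finset

section DigitSums

variable {R : Type*} [CommSemiring R] {α : R} {D : Set R}

def digitSums (α : R) (D : Set R) : Set R :=
  {z | ∃ (n : ℕ) (f : ℕ → R), (∀ j ≤ n, f j ∈ D) ∧ z = ∑ j ∈ range (n + 1), f j * α ^ j}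

theorem repSet_eq_digitSums (α : ℂ) (F : Set ℂ) : repSet α F = digitSums α F := rfl

theorem sum_range_succ_mul_pow (f : ℕ → R) (α : R) (n : ℕ) :
    ∑ j ∈ range (n + 1 + 1), f j * α ^ j = f 0 + α * ∑ j ∈ range (n + 1), f (j + 1) * α ^ j := by
  rw [sum_range_succ', mul_sum, add_comm]
  simp only [pow_zero, mul_one, pow_succ']
  congr 1
  exact sum_congr rfl fun j _ => by ring

theorem subset_digitSums : D ⊆ digitSums α D :=
  fun d hd => ⟨0, fun _ => d, fun _ _ => hd, by simp⟩

theorem add_mul_mem_digitSums {d w : R} (hd : d ∈ D) (hw : w ∈ digitSums α D) :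
    d + α * w ∈ digitSums α D := by
  obtain ⟨n, f, hf, rfl⟩ := hw
  refine ⟨n + 1, fun j => if j = 0 then d else f (j - 1), fun j hj => ?_, ?_⟩
  · dsimp only
    split_ifs
    · exact hd
    · exact hf _ (by omega)
  · rw [sum_range_succ_mul_pow]
    simp

theorem digitSums_induction {P : R → Prop} (digit : ∀ d ∈ D, P d)
    (add_mul : ∀ d ∈ D, ∀ w, P w → P (d + α * w)) : ∀ z ∈ digitSums α D, P z := by
  rintro z ⟨n, f, hf, rfl⟩
  induction n generalizing f with
  | zero => simpa using digit _ (hf 0 le_rfl)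
  | succ n ih =>
    rw [sum_range_succ_mul_pow]
    exact add_mul _ (hf 0 (Nat.zero_le _)) _ (ih _ fun j hj => hf _ (by omega))

theorem image_digitSums {R' : Type*} [CommSemiring R'] (φ : R →+* R') :
    φ '' digitSums α D = digitSums (φ α) (φ '' D) := by
  ext z
  constructor
  · rintro ⟨_, ⟨n, f, hf, rfl⟩, rfl⟩
    exact ⟨n, φ ∘ f, fun j hj => ⟨f j, hf j hj, rfl⟩, by simp [map_sum]⟩
  · rintro ⟨n, f, hf, rfl⟩
    choose! g hgD hg using hf
    refine ⟨∑ j ∈ range (n + 1), g j * α ^ j, ⟨n, g, hgD, rfl⟩, ?_⟩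
    simp only [map_sum, map_mul, map_pow]
    exact sum_congr rfl fun j hj => by rw [hg j (by simpa [Nat.lt_succ_iff] using hj)]

end DigitSums

theorem forall_mem_digitSums_of_descent {k : ℤ} {D : Set ℤ}
    (base : ∀ m : ℤ, m.natAbs ≤ 1 → m ∈ digitSums k D)
    (step : ∀ m : ℤ, 2 ≤ m.natAbs → ∃ d ∈ D, ∃ m', m = d + k * m' ∧ m'.natAbs < m.natAbs)
    (m : ℤ) : m ∈ digitSums k D := by
  induction h : m.natAbs using Nat.strong_induction_on generalizing m with
  | _ N ih =>
    rcases le_or_gt N 1 with hN | hN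
    · exact base m (h ▸ hN)
    · obtain ⟨d, hd, m', rfl, hlt⟩ := step m (by omega)
      exact add_mul_mem_digitSums hd (ih _ (h ▸ hlt) m' rfl)

theorem forall_mem_digitSums_of_natAbs_eq_one {k : ℤ} (hk : k.natAbs = 1) (m : ℤ) :
    m ∈ digitSums k {1, -1} := by
  have hkk : k * k = 1 := by rw [← Int.natAbs_mul_self, hk]; rfl
  have hdigit (d : ℤ) (hd : d.natAbs = 1) : d ∈ ({1, -1} : Set ℤ) := by simp; omega
  refine forall_mem_digitSums_of_descent (fun m hm => ?_) (fun m hm => ?_) m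
  · rcases (by omega : m.natAbs = 1 ∨ m = 0) with h | rfl
    · exact subset_digitSums (hdigit m h)
    · simpa [hkk] using add_mul_mem_digitSums (α := k) (hdigit 1 rfl)
        (subset_digitSums (hdigit (-k) (by simpa using hk)))
  · obtain ⟨d, hd, hlt⟩ : ∃ d : ℤ, d.natAbs = 1 ∧ (m - d).natAbs < m.natAbs :=
      ⟨if 0 < m then 1 else -1, by split_ifs <;> rfl, by split_ifs <;> omega⟩
    exact ⟨d, hdigit d hd, k * (m - d), by linear_combination (d - m) * hkk,
      by rwa [Int.natAbs_mul, hk, one_mul]⟩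

theorem forall_mem_digitSums_two (m : ℤ) : m ∈ digitSums 2 {-1, 0, 1} :=
  forall_mem_digitSums_of_descent (fun m hm => subset_digitSums (by simp; omega))
    (fun m _ => ⟨m % 2, by simp; omega, m / 2, by omega, by omega⟩) m

theorem forall_mem_digitSums_neg_two (m : ℤ) : m ∈ digitSums (-2) {0, 1} := by
  refine forall_mem_digitSums_of_descent (fun m hm => ?_)
    (fun m _ => ⟨m % 2, by simp; omega, -(m / 2), by omega, by omega⟩) m
  rcases (by omega : m = -1 ∨ m = 0 ∨ m = 1) with rfl | h | h
  · have h1 : (1 : ℤ) ∈ ({0, 1} : Set ℤ) := by simp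
    simpa using add_mul_mem_digitSums (α := (-2 : ℤ)) h1 (subset_digitSums h1)
  all_goals exact subset_digitSums (by simp [h])

theorem modEq_of_mem_digitSums {k c : ℤ} {D : Set ℤ} (hD : ∀ d ∈ D, d ≡ c [ZMOD k]) :
    ∀ z ∈ digitSums k D, z ≡ c [ZMOD k] :=
  digitSums_induction hD fun d hd _ _ =>
    (Int.modEq_iff_dvd.2 (by simp)).trans (hD d hd)

theorem eq_zero_of_neg_mem_digitSums_two {D : Set ℤ} {d : ℤ}
    (hd : ∀ e ∈ D, e ≡ d [ZMOD 2] → e = d) (h : -d ∈ digitSums 2 D) : d = 0 := by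
  refine digitSums_induction (P := fun z => z = -d → d = 0) (fun e he he' => ?_)
    (fun e he w ih hw => ?_) _ h rfl
  · have := hd e he (by rw [Int.ModEq]; omega)
    omega
  · have := hd e he (by rw [Int.ModEq]; omega)
    exact ih (by omega)

theorem exists_notMem_digitSums_two_pair (a b : ℤ) : ∃ m, m ∉ digitSums 2 {a, b} := by
  by_cases hab : a ≡ b [ZMOD 2]
  · refine ⟨a + 1, fun h => ?_⟩
    have := modEq_of_mem_digitSums (c := a) (by simp [Int.ModEq.refl, hab.symm]) _ h
    rw [Int.ModEq] at this
    omega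
  · by_contra! h
    have ha := eq_zero_of_neg_mem_digitSums_two (d := a) (by
      rintro e (rfl | rfl) he
      exacts [rfl, absurd he.symm hab]) (h (-a))
    have hb := eq_zero_of_neg_mem_digitSums_two (d := b) (by
      rintro e (rfl | rfl) he
      exacts [absurd he hab, rfl]) (h (-b))
    exact hab (by rw [ha, hb])

/-- With a single digit `s` every expansion is `s` times a geometric sum, which is nonnegative for
`k ≥ -1`; so `1` and `-1` cannot both be expanded. -/
theorem two_le_card_of_neg_one_le {k : ℤ} (hk : -1 ≤ k) {D : Finset ℤ}
    (hD : ∀ m, m ∈ digitSums k ↑D) : 2 ≤ D.card := by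
  by_contra! hcard
  have hne : D.Nonempty := by
    obtain ⟨n, f, hf, -⟩ := hD 0
    exact ⟨f 0, hf 0 n.zero_le⟩
  obtain ⟨s, rfl⟩ := card_eq_one.1 (show D.card = 1 by have := hne.card_pos; omega)
  have hgeom : ∀ z ∈ digitSums k ↑({s} : Finset ℤ), ∃ G : ℤ, 0 ≤ G ∧ z = s * G := by
    rintro z ⟨n, f, hf, rfl⟩
    refine ⟨∑ j ∈ range (n + 1), k ^ j, not_lt.1 fun h => ?_, ?_⟩
    · have := ((geom_sum_neg_iff n.succ_ne_zero).1 h).2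
      omega
    · rw [mul_sum]
      exact sum_congr rfl fun j hj => by
        rw [(by simpa using hf j (by simpa [Nat.lt_succ_iff] using hj) : f j = s)]
  obtain ⟨G, hG, h1⟩ := hgeom 1 (hD 1)
  obtain ⟨G', hG', h2⟩ := hgeom (-1) (hD (-1))
  have hsum : G + G' = 0 := by linear_combination G' * h1 - G * h2
  rw [(by omega : G = 0), mul_zero] at h1
  exact one_ne_zero h1

theorem intCast_mem_zadj (α : ℂ) (m : ℤ) : (m : ℂ) ∈ Zadj α := ⟨C m, by simp⟩

theorem zadj_intCast (k : ℤ) : Zadj (k : ℂ) = Set.range ((↑) : ℤ → ℂ) := by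
  ext z
  constructor
  · rintro ⟨P, rfl⟩
    exact ⟨aeval k P, by simpa using (aeval_algebraMap_apply ℂ k P).symm⟩
  · rintro ⟨m, rfl⟩
    exact intCast_mem_zadj _ m

theorem repSet_intCast_eq_zadj_iff (k : ℤ) (D : Finset ℤ) :
    repSet (k : ℂ) ↑(D.image ((↑) : ℤ → ℂ)) = Zadj k ↔ ∀ m, m ∈ digitSums k ↑D := by
  have h := image_digitSums (α := k) (D := (D : Set ℤ)) (Int.castRingHom ℂ)
  rw [Int.coe_castRingHom] at h
  rw [coe_image, repSet_eq_digitSums, zadj_intCast, ← h, ← Set.image_univ,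
    (Set.image_injective.2 Int.cast_injective).eq_iff, Set.eq_univ_iff_forall]

theorem memF_intCast_iff (k : ℤ) (N : ℕ) :
    memF k N ↔ (∃ D : Finset ℤ, D.card = N ∧ ∀ m, m ∈ digitSums k ↑D) ∧
      ∀ D : Finset ℤ, (∀ m, m ∈ digitSums k ↑D) → N ≤ D.card := by
  have hcard (D : Finset ℤ) : (D.image ((↑) : ℤ → ℂ)).card = D.card :=
    card_image_of_injective D Int.cast_injective
  have hlift (S : Finset ℂ) (hS : repSet (k : ℂ) S = Zadj k) :
      ∃ D : Finset ℤ, D.image ((↑) : ℤ → ℂ) = S := by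
    have hsub : ↑S ⊆ ((↑) : ℤ → ℂ) '' Set.univ := by
      rw [Set.image_univ, ← zadj_intCast, ← hS]
      exact subset_digitSums
    obtain ⟨D, -, hD⟩ := subset_set_image_iff.1 hsub
    exact ⟨D, hD⟩
  constructor
  · rintro ⟨⟨S, rfl, hS⟩, hmin⟩
    obtain ⟨D, rfl⟩ := hlift S hS
    refine ⟨⟨D, (hcard D).symm, (repSet_intCast_eq_zadj_iff k D).1 hS⟩, fun D' hD' => ?_⟩
    rw [← hcard D']
    exact hmin _ ((repSet_intCast_eq_zadj_iff k D').2 hD')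
  · rintro ⟨⟨D, rfl, hD⟩, hmin⟩
    refine ⟨⟨_, hcard D, (repSet_intCast_eq_zadj_iff k D).2 hD⟩, fun S hS => ?_⟩
    obtain ⟨D', rfl⟩ := hlift S hS
    rw [hcard]
    exact hmin D' ((repSet_intCast_eq_zadj_iff k D').1 hS)

theorem repSet_ne_zadj_of_norm_lt_one {α : ℂ} (hα : ‖α‖ < 1) (S : Finset ℂ) :
    repSet α S ≠ Zadj α := by
  set M := ∑ s ∈ S, ‖s‖
  set B := M / (1 - ‖α‖)
  have hM : 0 ≤ M := sum_nonneg fun s _ => norm_nonneg s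
  have hpos : 0 < 1 - ‖α‖ := by linarith
  have hB : M + ‖α‖ * B = B := by simp only [B]; field_simp; ring
  have hbound : ∀ z ∈ repSet α S, ‖z‖ ≤ B := by
    refine digitSums_induction (fun d hd => ?_) (fun d hd w hw => ?_)
    · exact (single_le_sum (fun s _ => norm_nonneg s) hd).trans
        (le_div_self hM hpos (by linarith [norm_nonneg α]))
    · calc ‖d + α * w‖ ≤ ‖d‖ + ‖α‖ * ‖w‖ := (norm_add_le _ _).trans_eq (by rw [norm_mul])
        _ ≤ M + ‖α‖ * B := by
          gcongr
          exact single_le_sum (fun s _ => norm_nonneg s) hd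
        _ = B := hB
  intro h
  obtain ⟨m, hm⟩ := exists_nat_gt B
  have := hbound m (h ▸ by exact_mod_cast intCast_mem_zadj α m)
  rw [Complex.norm_natCast] at this
  linarith

theorem num_dvd_coeff_zero_of_aeval_eq_zero {α : ℚ} {P : ℤ[X]} (h : aeval (α : ℂ) P = 0) :
    α.num ∣ P.coeff 0 := by
  have hα : aeval α P = 0 := by
    apply (algebraMap ℚ ℂ).injective
    rw [← aeval_algebraMap_apply, map_zero, ← h]
    rfl
  exact (Rat.isFractionRingNum α).symm.dvd.trans (num_dvd_of_is_root hα)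

theorem natAbs_num_le_card (α : ℚ) {S : Finset ℂ} (h : repSet (α : ℂ) S = Zadj α) :
    α.num.natAbs ≤ S.card := by
  have hS : ∀ s ∈ S, ∃ P : ℤ[X], aeval (α : ℂ) P = s := fun s hs =>
    (h ▸ subset_digitSums : (S : Set ℂ) ⊆ Zadj α) hs
  choose! Q hQ using hS
  let residue : S → ZMod α.num.natAbs := fun s => ((Q s).coeff 0 : ℤ)
  have hsurj : Function.Surjective residue := by
    intro w
    obtain ⟨m, rfl⟩ := ZMod.intCast_surjective w
    obtain ⟨n, f, hf, hm⟩ : (m : ℂ) ∈ repSet (α : ℂ) S := h ▸ intCast_mem_zadj _ m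
    refine ⟨⟨f 0, hf 0 n.zero_le⟩, ?_⟩
    have hroot : aeval (α : ℂ) (C m - ∑ j ∈ range (n + 1), Q (f j) * X ^ j) = 0 := by
      rw [map_sub, aeval_C, algebraMap_int_eq, eq_intCast, hm, map_sum, sub_eq_zero]
      exact sum_congr rfl fun j hj => by
        rw [map_mul, map_pow, aeval_X, hQ _ (hf j (by simpa [Nat.lt_succ_iff] using hj))]
    have hcoeff :
        (C m - ∑ j ∈ range (n + 1), Q (f j) * X ^ j).coeff 0 = m - (Q (f 0)).coeff 0 := by
      simp [finsetSum_coeff, mul_coeff_zero, sum_range_succ']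
    have hdvd := hcoeff ▸ num_dvd_coeff_zero_of_aeval_eq_zero hroot
    exact (ZMod.intCast_eq_intCast_iff_dvd_sub _ _ _).2 (Int.natAbs_dvd.2 hdvd)
  simpa [Nat.card_zmod] using Nat.card_le_card_of_surjective residue hsurj

theorem den_le_natAbs_num {α : ℚ} (h : 1 ≤ |α|) : α.den ≤ α.num.natAbs := by
  have hden : (0 : ℚ) < α.den := by exact_mod_cast α.pos
  rw [← Rat.num_div_den α, abs_div, Nat.abs_cast, le_div_iff₀ hden, one_mul, ← Int.cast_abs,
    ← Nat.cast_natAbs] at h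
  exact_mod_cast h

theorem eq_of_one_le_abs_of_natAbs_num_le_two {α : ℚ} (h1 : 1 ≤ |α|)
    (h2 : α.num.natAbs ≤ 2) : α = -2 ∨ α = -1 ∨ α = 1 ∨ α = 2 := by
  have hden := den_le_natAbs_num h1
  have hcop := α.reduced
  have hden1 : α.den = 1 := by
    have := α.pos
    interval_cases h : α.num.natAbs <;> interval_cases α.den <;> simp_all
  rw [← Rat.coe_int_num_of_den_eq_one hden1]
  have : α.num = -2 ∨ α.num = -1 ∨ α.num = 1 ∨ α.num = 2 := by omega
  rcases this with h | h | h | h <;> simp [h]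

theorem memF.unique {α : ℂ} {N M : ℕ} (hN : memF α N) (hM : memF α M) : N = M :=
  le_antisymm (hN.2 _ hM.1.choose_spec.2 |>.trans_eq hM.1.choose_spec.1)
    (hM.2 _ hN.1.choose_spec.2 |>.trans_eq hN.1.choose_spec.1)

theorem natAbs_le_card_of_forall_mem_digitSums {k : ℤ} {D : Finset ℤ}
    (hD : ∀ m, m ∈ digitSums k ↑D) : k.natAbs ≤ D.card := by
  have h := (repSet_intCast_eq_zadj_iff k D).2 hD
  rw [← Rat.cast_intCast] at h
  simpa using (natAbs_num_le_card (k : ℚ) h).trans card_image_le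

theorem memF_neg_two : memF (-2) 2 := by
  simpa using (memF_intCast_iff (-2) 2).2
    ⟨⟨{0, 1}, rfl, by simpa using forall_mem_digitSums_neg_two⟩,
      fun _ hD => by simpa using natAbs_le_card_of_forall_mem_digitSums hD⟩

theorem memF_of_natAbs_eq_one {k : ℤ} (hk : k.natAbs = 1) : memF k 2 :=
  (memF_intCast_iff k 2).2
    ⟨⟨{1, -1}, rfl, by simpa using forall_mem_digitSums_of_natAbs_eq_one hk⟩,
      fun _ hD => two_le_card_of_neg_one_le (by omega) hD⟩

theorem memF_two_three : memF 2 3 := by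
  suffices memF ((2 : ℤ) : ℂ) 3 by simpa using this
  refine (memF_intCast_iff 2 3).2
    ⟨⟨{-1, 0, 1}, rfl, by simpa using forall_mem_digitSums_two⟩, fun D hD => ?_⟩
  have h2 : 2 ≤ D.card := natAbs_le_card_of_forall_mem_digitSums hD
  refine lt_of_le_of_ne h2 fun hcard => ?_
  obtain ⟨a, b, -, rfl⟩ := card_eq_two.1 hcard.symm
  obtain ⟨m, hm⟩ := exists_notMem_digitSums_two_pair a b
  exact hm (by simpa using hD m)

/-- The rational numbers in `𝓕₂` are exactly `−2, −1, 1`; in particular `2 ∈ 𝓕₃`. -/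
theorem rational_memF_two_iff :
    (∀ α : ℚ, memF (α : ℂ) 2 ↔ (α = -2 ∨ α = -1 ∨ α = 1)) ∧
    memF ((2 : ℚ) : ℂ) 3 := by
  refine ⟨fun α => ⟨fun hα => ?_, ?_⟩, by simpa using memF_two_three⟩
  · obtain ⟨S, hcard, hS⟩ := hα.1
    have habs : 1 ≤ |α| := by
      by_contra! h
      refine repSet_ne_zadj_of_norm_lt_one ?_ S hS
      rw [Complex.norm_ratCast, ← Rat.cast_abs]
      exact_mod_cast h
    obtain h | rfl : (α = -2 ∨ α = -1 ∨ α = 1) ∨ α = 2 := by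
      simpa only [or_assoc] using
        eq_of_one_le_abs_of_natAbs_num_le_two habs (hcard ▸ natAbs_num_le_card α hS)
    · exact h
    · exact absurd (hα.unique (by simpa using memF_two_three)) (by norm_num)
  · rintro (rfl | rfl | rfl)
    · simpa using memF_neg_two
    · simpa using memF_of_natAbs_eq_one (k := -1) rfl
    · simpa using memF_of_natAbs_eq_one (k := 1) rfl
end
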